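/- Let M = (G, {j}, {i}, Leak) be a strongly connected linear compartmental model with n compartments. If Leak = ∅, then the constant coefficient c_0 of det(λI − A) is zero (i.e., det A = 0); if Leak ≠ ∅, then det A is a nonzero polynomial in the parameters a_{kℓ}. -/

import Mathlib

open scoped Classical

variable {V : Type*} [Fintype V] [DecidableEq V]

/-- Number of edges of `F` outgoing from `v`. -/
def outDeg (F : Finset (V × V)) (v : V) : ℕ := (F.filter fun e => e.1 = v).card

/-- The underlying undirected (simple) graph of a set of directed edges. -/
def undirAdj (F : Finset (V × V)) : SimpleGraph V :=
  SimpleGraph.fromRel fun a b => (a, b) ∈ F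

/-- `F` is an incoming forest: its underlying undirected graph is acyclic and
every vertex has at most one outgoing edge. -/
def IsIncomingForest (F : Finset (V × V)) : Prop :=
  (undirAdj F).IsAcyclic ∧ ∀ v : V, outDeg F v ≤ 1
open Polynomial

/-- The compartmental matrix of a linear compartmental model with edge set `E`
(edge `(j,i)` means `j → i`, labeled `a i j`), leak set `Lk` (leak labels `a0`). -/
def cmpMatrix {n : ℕ} {R : Type*} [CommRing R] (E : Finset (Fin n × Fin n))
    (Lk : Finset (Fin n)) (a : Fin n → Fin n → R) (a0 : Fin n → R) :
    Matrix (Fin n) (Fin n) R :=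
  fun i j =>
    if i = j then
      -((if j ∈ Lk then a0 j else 0) + ∑ k ∈ Finset.univ.filter (fun k => (j, k) ∈ E), a k j)
    else if (j, i) ∈ E then a i j else 0

/-- The leak-augmented graph `Ḡ`: vertex `none` is the leak node `0`, and each
leak `ℓ` contributes an edge `ℓ → 0`. -/
def leakAug {n : ℕ} (E : Finset (Fin n × Fin n)) (Lk : Finset (Fin n)) :
    Finset (Option (Fin n) × Option (Fin n)) :=
  E.image (fun e => (some e.1, some e.2)) ∪ Lk.image (fun l => (some l, none))

/-- Edge labels of the leak-augmented graph. -/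
def Lab {n : ℕ} {R : Type*} [CommRing R] (a : Fin n → Fin n → R) (a0 : Fin n → R) :
    Option (Fin n) × Option (Fin n) → R
  | (some s, some t) => a t s
  | (some s, none) => a0 s
  | (none, _) => 0

/-!
Without leaks every column of `A` sums to zero, so `(1, …, 1) A = 0` and `det A = 0`.
With a leak at `ℓ`, strong connectivity gives a spanning in-tree towards `ℓ` with parent map `p`.
Specializing the parameters of the tree edges `j → p j` and of the leak at `ℓ` to `1`, and all
other parameters to `0`, turns `A` into `N - 1`, where `N` is the adjacency matrix of the tree.
Since `N` is nilpotent, `N - 1` is invertible, so `det A` has a nonzero specialization.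
-/

namespace Relation

variable {α : Type*} (r : α → α → Prop) (ℓ : α)

def ReachesWithin : ℕ → α → Prop
  | 0, v => v = ℓ
  | k + 1, v => v = ℓ ∨ ∃ w, r v w ∧ ReachesWithin k w

variable {r ℓ}

lemma ReflTransGen.exists_reachesWithin {v : α} (h : ReflTransGen r v ℓ) :
    ∃ k, ReachesWithin r ℓ k v := by
  induction h using ReflTransGen.head_induction_on with
  | refl => exact ⟨0, rfl⟩
  | head hvw _ ih =>
    obtain ⟨k, hk⟩ := ih
    exact ⟨k + 1, Or.inr ⟨_, hvw, hk⟩⟩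

lemma exists_parent_of_forall_reflTransGen (h : ∀ v, ReflTransGen r v ℓ) :
    ∃ (p : α → α) (d : α → ℕ), ∀ v, v ≠ ℓ → r v (p v) ∧ d (p v) < d v := by
  classical
  have hreach v := (h v).exists_reachesWithin
  let d v := Nat.find (hreach v)
  have hstep : ∀ v, v ≠ ℓ → ∃ w, r v w ∧ d w < d v := by
    intro v hv
    have hs : ReachesWithin r ℓ (d v) v := Nat.find_spec (hreach v)
    cases hdv : d v with
    | zero => rw [hdv] at hs; exact absurd hs hv
    | succ k =>
      rw [hdv] at hs
      obtain hvℓ | ⟨w, hvw, hw⟩ := hs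
      · exact absurd hvℓ hv
      · exact ⟨w, hvw, Nat.lt_succ_of_le (Nat.find_le hw)⟩
  have : Nonempty α := ⟨ℓ⟩
  choose! p hp using hstep
  exact ⟨p, d, hp⟩

end Relation

theorem Matrix.isNilpotent_of_apply_ne_zero_lt {n R : Type*} [Fintype n] [DecidableEq n]
    [Semiring R] {P : Matrix n n R} (d : n → ℕ) (h : ∀ i j, P i j ≠ 0 → d i < d j) :
    IsNilpotent P := by
  have hpow : ∀ k i j, (P ^ (k + 1)) i j ≠ 0 → d i + k < d j := by
    intro k
    induction k with
    | zero => simpa using h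
    | succ k ih =>
      intro i j hij
      rw [pow_succ, Matrix.mul_apply] at hij
      obtain ⟨t, -, hit⟩ := Finset.exists_ne_zero_of_sum_ne_zero hij
      have h1 := ih i t (left_ne_zero_of_mul hit)
      have h2 := h t j (right_ne_zero_of_mul hit)
      omega
  refine ⟨Finset.univ.sup d + 1, Matrix.ext fun i j => by_contra fun hij => ?_⟩
  have := hpow _ i j hij
  have := Finset.le_sup (f := d) (Finset.mem_univ j)
  omega

theorem Matrix.det_eq_zero_of_sum_col_eq_zero {n R : Type*} [Fintype n] [DecidableEq n]
    [Nonempty n] [CommRing R] {M : Matrix n n R} (h : ∀ j, ∑ i, M i j = 0) : M.det = 0 := by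
  rw [← M.det_transpose]
  refine Matrix.det_eq_zero_of_mulVec_eq_zero_of_mem_nonZeroDivisors (v := fun _ => 1) ?_
    (i := Classical.arbitrary n) (one_mem _)
  ext j
  simpa [Matrix.mulVec, dotProduct] using h j

section InTree

variable {ι R : Type*} [DecidableEq ι] [Semiring R]

def inTreeMatrix (p : ι → ι) (ℓ : ι) : Matrix ι ι R :=
  Matrix.of fun i j => if j ≠ ℓ ∧ i = p j then 1 else 0

lemma isNilpotent_inTreeMatrix [Fintype ι] {p : ι → ι} {ℓ : ι} (d : ι → ℕ)
    (hd : ∀ j, j ≠ ℓ → d (p j) < d j) : IsNilpotent (inTreeMatrix p ℓ : Matrix ι ι R) := by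
  refine Matrix.isNilpotent_of_apply_ne_zero_lt d fun i j hij => ?_
  obtain ⟨hj, rfl⟩ : j ≠ ℓ ∧ i = p j := by
    by_contra h
    simp [inTreeMatrix, h] at hij
  exact hd j hj

end InTree

section CmpMatrix

variable {n : ℕ} {R S : Type*} [CommRing R] [CommRing S] (E : Finset (Fin n × Fin n))
  (Lk : Finset (Fin n))

lemma cmpMatrix_map (a : Fin n → Fin n → R) (a0 : Fin n → R) (f : R →+* S) :
    (cmpMatrix E Lk a a0).map f = cmpMatrix E Lk (fun i j => f (a i j)) (fun i => f (a0 i)) := by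
  ext i j
  simp only [Matrix.map_apply, cmpMatrix]
  split_ifs <;> simp

lemma sum_cmpMatrix_col {j : Fin n} (hj : (j, j) ∉ E) (a : Fin n → Fin n → R) (a0 : Fin n → R) :
    ∑ i, cmpMatrix E Lk a a0 i j = -(if j ∈ Lk then a0 j else 0) := by
  have hentry : ∀ i, cmpMatrix E Lk a a0 i j = (if (j, i) ∈ E then a i j else 0) -
      if i = j then (if j ∈ Lk then a0 j else 0) + ∑ k with (j, k) ∈ E, a k j else 0 := by
    intro i
    by_cases hij : i = j
    · subst hij
      simp [cmpMatrix, hj]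
    · simp [cmpMatrix, hij]
  rw [Finset.sum_congr rfl fun i _ => hentry i, Finset.sum_sub_distrib, Finset.sum_ite_eq',
    if_pos (Finset.mem_univ j), ← Finset.sum_filter]
  ring

lemma cmpMatrix_inTreeMatrix {p : Fin n → Fin n} {ℓ : Fin n} (hℓ : ℓ ∈ Lk)
    (hp : ∀ j, j ≠ ℓ → (j, p j) ∈ E) (hloop : ∀ j, (j, j) ∉ E) :
    cmpMatrix E Lk (inTreeMatrix p ℓ) (Pi.single ℓ 1) = inTreeMatrix p ℓ - (1 : Matrix _ _ R) := by
  have hpj : ∀ j, j ≠ ℓ → p j ≠ j := fun j hj hpj => hloop j (by simpa [hpj] using hp j hj)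
  ext i j
  by_cases hij : i = j
  · subst hij
    by_cases hiℓ : i = ℓ
    · subst hiℓ
      simp [cmpMatrix, inTreeMatrix, hℓ]
    · have hmem : p i ∈ Finset.univ.filter fun k => (i, k) ∈ E := by simp [hp i hiℓ]
      simp [cmpMatrix, inTreeMatrix, hiℓ, Ne.symm (hpj i hiℓ), Finset.sum_ite_eq', hmem]
  · by_cases hE : (j, i) ∈ E
    · simp [cmpMatrix, inTreeMatrix, hij, hE]
    · have : ¬(j ≠ ℓ ∧ i = p j) := fun ⟨hj, hi⟩ => hE (hi ▸ hp j hj)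
      simp [cmpMatrix, inTreeMatrix, hij, hE, this]

end CmpMatrix

theorem det_cmpMatrix_zero_iff_no_leak_general (m : ℕ)
    (E : Finset (Fin (m + 1) × Fin (m + 1))) (Lk : Finset (Fin (m + 1)))
    (hloop : ∀ e ∈ E, e.1 ≠ e.2)
    (hsc : ∀ u v : Fin (m + 1), Relation.ReflTransGen (fun x y => (x, y) ∈ E) u v)
    (A : Matrix (Fin (m + 1)) (Fin (m + 1))
        (MvPolynomial ((Fin (m + 1) × Fin (m + 1)) ⊕ Fin (m + 1)) ℚ))
    (hA : A = cmpMatrix E Lk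
        (fun i j => MvPolynomial.X (Sum.inl (i, j)))
        (fun i => MvPolynomial.X (Sum.inr i))) :
    (Lk = ∅ → A.det = 0) ∧ (Lk.Nonempty → A.det ≠ 0) := by
  have hnoloop : ∀ j, (j, j) ∉ E := fun j hj => hloop _ hj rfl
  refine ⟨fun hLk => ?_, fun ⟨ℓ, hℓ⟩ hdet => ?_⟩
  · subst hLk
    exact Matrix.det_eq_zero_of_sum_col_eq_zero fun j => by
      simp [hA, sum_cmpMatrix_col E ∅ (hnoloop j)]
  · obtain ⟨p, d, hp⟩ := Relation.exists_parent_of_forall_reflTransGen fun v => hsc v ℓ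
    let σ := Sum.elim (Function.uncurry (inTreeMatrix p ℓ : Matrix _ _ ℚ)) (Pi.single ℓ 1)
    have hspec : A.map (MvPolynomial.eval σ) = inTreeMatrix p ℓ - 1 := by
      rw [hA, cmpMatrix_map]
      simp only [MvPolynomial.eval_X, σ, Sum.elim_inl, Sum.elim_inr]
      exact cmpMatrix_inTreeMatrix E Lk hℓ (fun j hj => (hp j hj).1) hnoloop
    have hunit := (isNilpotent_inTreeMatrix (R := ℚ) d fun j hj => (hp j hj).2).isUnit_sub_one
    rw [← hspec, Matrix.isUnit_iff_isUnit_det, ← RingHom.mapMatrix_apply, ← RingHom.map_det, hdet,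
      map_zero] at hunit
    exact not_isUnit_zero hunit

/-- For a strongly connected linear compartmental model with one input and one output
and parameters treated as independent indeterminates: if there are no leaks then
`det A = 0` (so the constant coefficient `c_0` of `det(λI - A)` vanishes), while if
there is at least one leak then `det A` is a nonzero polynomial in the parameters. -/
theorem det_cmpMatrix_zero_iff_no_leak (m : ℕ)
    (E : Finset (Fin (m + 1) × Fin (m + 1))) (Lk : Finset (Fin (m + 1)))
    (hloop : ∀ e ∈ E, e.1 ≠ e.2)
    (hsc : ∀ u v : Fin (m + 1), Relation.ReflTransGen (fun x y => (x, y) ∈ E) u v)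
    (inp outp : Fin (m + 1))
    (A : Matrix (Fin (m + 1)) (Fin (m + 1))
        (MvPolynomial ((Fin (m + 1) × Fin (m + 1)) ⊕ Fin (m + 1)) ℚ))
    (hA : A = cmpMatrix E Lk
        (fun i j => MvPolynomial.X (Sum.inl (i, j)))
        (fun i => MvPolynomial.X (Sum.inr i))) :
    (Lk = ∅ → A.det = 0) ∧ (Lk.Nonempty → A.det ≠ 0) :=
  det_cmpMatrix_zero_iff_no_leak_general m E Lk hloop hsc A hA
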